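/- arXiv:1704.02534 — 2 statements merged into one kernel-verified Lean document; each statement's English description precedes it below -/
import Mathlib

section
/- Let 𝒳 be a finite index set with weights pen(X) ≥ 1 satisfying Σ_{X∈𝒳} 2^{−pen(X)} ≤ 1. For each X ∈ 𝒳 let a_X(1), …, a_X(N) be reals with 0 ≤ a_X(i) ≤ Q (Q > 0). Let γ, δ ∈ (0,1) and let S_1, …, S_N be i.i.d. Bernoulli(γ). Then P[ ∃ X ∈ 𝒳 : Σ_{i=1}^N S_i a_X(i) ≤ (γ/2) Σ_{i=1}^N a_X(i) − (4Q/3)( log(1/δ) + pen(X) log 2 ) ] ≤ δ. -/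
open MeasureTheory ProbabilityTheory

noncomputable section

/-- Bernoulli measure on `Bool` with parameter `γ`. -/
def bern (γ : ℝ) : Measure Bool :=
  ENNReal.ofReal γ • Measure.dirac true + ENNReal.ofReal (1 - γ) • Measure.dirac false

instance bern.isFiniteMeasure (γ : ℝ) : IsFiniteMeasure (bern γ) := by
  constructor
  simp only [bern, Measure.coe_add, Measure.coe_smul, Pi.add_apply, Pi.smul_apply,
    smul_eq_mul, measure_univ, mul_one]
  exact ENNReal.add_lt_top.mpr ⟨ENNReal.ofReal_lt_top, ENNReal.ofReal_lt_top⟩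

/-- The CP tensor `[A,B,C]`, with entries `∑ f, A i f * B j f * C k f`. -/
def cp {n1 n2 n3 F : ℕ} (A : Matrix (Fin n1) (Fin F) ℝ) (B : Matrix (Fin n2) (Fin F) ℝ)
    (C : Matrix (Fin n3) (Fin F) ℝ) : Fin n1 × Fin n2 × Fin n3 → ℝ :=
  fun t => ∑ f, A t.1 f * B t.2.1 f * C t.2.2 f

/-- `‖C‖₀`, the number of nonzero entries of a matrix. -/
def norm0 {n m : ℕ} (C : Matrix (Fin n) (Fin m) ℝ) : ℕ :=
  Set.ncard {q : Fin n × Fin m | C q.1 q.2 ≠ 0}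

/-- Kullback–Leibler divergence `D(p‖q)` between two densities w.r.t. a base measure `ν`. -/
def klD (ν : Measure ℝ) (p q : ℝ → ℝ) : ℝ := ∫ y, p y * Real.log (p y / q y) ∂ν

/-- Hellinger affinity `A(p,q)` between two densities w.r.t. a base measure `ν`. -/
def affin (ν : Measure ℝ) (p q : ℝ → ℝ) : ℝ := ∫ y, Real.sqrt (p y * q y) ∂ν

/-- A set of `L` equispaced points in `[-c, c]`. -/
def grid (c : ℝ) (L : ℕ) : Set ℝ := {x | ∃ l : Fin L, x = -c + l * (2 * c / ((L : ℝ) - 1))}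

/-- The number of quantization levels `L_lev = 2 ^ ⌈log₂ (n_max ^ β)⌉`. -/
def Llev (nmax : ℕ) (β : ℝ) : ℕ := 2 ^ (⌈Real.logb 2 ((nmax : ℝ) ^ β)⌉.toNat)

/-- `L_loc = 2 ^ ⌈log₂ (n3 * F)⌉`. -/
def Lloc (n3 F : ℕ) : ℕ := 2 ^ (⌈Real.logb 2 ((n3 * F : ℕ) : ℝ)⌉.toNat)

/-- Gaussian density with mean `μ` and variance `σ²`. -/
def gpdf (σ μ x : ℝ) : ℝ :=
  (Real.sqrt (2 * Real.pi * σ ^ 2))⁻¹ * Real.exp (-(x - μ) ^ 2 / (2 * σ ^ 2))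

/-- Maximum absolute entry of a matrix. -/
def matMaxAbs {α β : Type} [Fintype α] [Fintype β] (M : α → β → ℝ) : ℝ :=
  ⨆ q : α × β, |M q.1 q.2|

/-- Khatri–Rao (columnwise Kronecker) product. -/
def khatriRao {m n F : ℕ} (A : Matrix (Fin m) (Fin F) ℝ) (B : Matrix (Fin n) (Fin F) ℝ) :
    Matrix (Fin m × Fin n) (Fin F) ℝ := fun p f => A p.1 f * B p.2 f

/-!
For a fixed `X` this is a Chernoff bound: at `λ = 3 / (4 Q)` every `λ a_X(i)` lies in `[0, 1]`,
where `γ e^{-x} + 1 - γ ≤ e^{-γ x / 2}`, so the moment generating function of `-λ Σ S_i a_X(i)` is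
at most `e^{-λ γ Σ a_X(i) / 2}`, and Markov's inequality bounds the `X`-th event by
`exp (-(log (1/δ) + pen X log 2)) = δ 2^{-pen X}`. Kraft's inequality makes the union bound
over `X` sum to at most `δ`.
-/

open Real

lemma isProbabilityMeasure_bern {γ : ℝ} (hγ0 : 0 ≤ γ) (hγ1 : γ ≤ 1) :
    IsProbabilityMeasure (bern γ) := by
  constructor
  simp only [bern, Measure.coe_add, Measure.coe_smul, Pi.add_apply, Pi.smul_apply,
    smul_eq_mul, measure_univ, mul_one]
  rw [← ENNReal.ofReal_add hγ0 (by linarith), add_sub_cancel, ENNReal.ofReal_one]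

lemma integral_bern {γ : ℝ} (hγ0 : 0 ≤ γ) (hγ1 : γ ≤ 1) (g : Bool → ℝ) :
    ∫ s, g s ∂bern γ = γ * g true + (1 - γ) * g false := by
  rw [bern, integral_add_measure (Integrable.of_finite.smul_measure ENNReal.ofReal_ne_top)
    (Integrable.of_finite.smul_measure ENNReal.ofReal_ne_top), integral_smul_measure,
    integral_smul_measure, integral_dirac, integral_dirac,
    ENNReal.toReal_ofReal hγ0, ENNReal.toReal_ofReal (by linarith), smul_eq_mul, smul_eq_mul]

lemma mgf_pi_bern_weightedSum {ι : Type*} [Fintype ι] {γ : ℝ} (hγ0 : 0 ≤ γ) (hγ1 : γ ≤ 1)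
    (a : ι → ℝ) (t : ℝ) :
    mgf (fun b : ι → Bool => ∑ i, if b i then a i else 0) (Measure.pi fun _ => bern γ) t
      = ∏ i, (γ * exp (t * a i) + (1 - γ)) := by
  simp only [mgf, Finset.mul_sum, Real.exp_sum]
  refine (integral_fintype_prod_eq_prod
    (fun i (s : Bool) => exp (t * if s then a i else 0))).trans ?_
  simp [integral_bern hγ0 hγ1]

/-- `exp (-x) ≤ 1 / (1 + x) ≤ 1 - x / 2`, the last step being `x (1 - x) ≥ 0`. -/
lemma exp_neg_le_one_sub_half {x : ℝ} (hx0 : 0 ≤ x) (hx1 : x ≤ 1) :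
    exp (-x) ≤ 1 - x / 2 := by
  have hinv : exp (-x) * exp x = 1 := by rw [← exp_add, neg_add_cancel, exp_zero]
  nlinarith [add_one_le_exp x, exp_pos x, exp_pos (-x)]

lemma mul_exp_neg_add_one_sub_le {γ x : ℝ} (hγ0 : 0 ≤ γ) (hx0 : 0 ≤ x) (hx1 : x ≤ 1) :
    γ * exp (-x) + (1 - γ) ≤ exp (-(γ * x / 2)) :=
  calc γ * exp (-x) + (1 - γ) ≤ γ * (1 - x / 2) + (1 - γ) := by
        gcongr; exact exp_neg_le_one_sub_half hx0 hx1
    _ = -(γ * x / 2) + 1 := by ring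
    _ ≤ exp (-(γ * x / 2)) := add_one_le_exp _

theorem pi_bern_weightedSum_le_le_exp {ι : Type*} [Fintype ι] {γ Q : ℝ}
    (hγ0 : 0 ≤ γ) (hγ1 : γ ≤ 1) (hQ : 0 < Q) {a : ι → ℝ} (ha : ∀ i, 0 ≤ a i ∧ a i ≤ Q)
    (s : ℝ) :
    (Measure.pi fun _ : ι => bern γ)
        {b | ∑ i, (if b i then a i else 0) ≤ γ / 2 * ∑ i, a i - 4 * Q / 3 * s}
      ≤ ENNReal.ofReal (exp (-s)) := by
  have := isProbabilityMeasure_bern hγ0 hγ1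
  set lam := 3 / (4 * Q) with hlam
  have hlam0 : 0 < lam := by positivity
  have hfactor : ∀ i, γ * exp (-lam * a i) + (1 - γ) ≤ exp (-(γ * (lam * a i) / 2)) := by
    intro i
    have hlam_a : lam * a i ≤ 1 := by
      rw [hlam, div_mul_eq_mul_div, div_le_one (by positivity)]; linarith [(ha i).2]
    rw [neg_mul]
    exact mul_exp_neg_add_one_sub_le hγ0 (mul_nonneg hlam0.le (ha i).1) hlam_a
  have hmgf : mgf (fun b : ι → Bool => ∑ i, if b i then a i else 0)
      (Measure.pi fun _ => bern γ) (-lam) ≤ exp (-(γ * (lam * ∑ i, a i) / 2)) := by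
    rw [mgf_pi_bern_weightedSum hγ0 hγ1, Finset.mul_sum, Finset.mul_sum, Finset.sum_div,
      ← Finset.sum_neg_distrib, exp_sum]
    refine Finset.prod_le_prod (fun i _ => ?_) (fun i _ => hfactor i)
    exact add_nonneg (mul_nonneg hγ0 (exp_pos _).le) (by linarith)
  rw [← ENNReal.ofReal_toReal (measure_ne_top _ _)]
  refine ENNReal.ofReal_le_ofReal ((measure_le_le_exp_mul_mgf _ (neg_nonpos.2 hlam0.le)
    .of_finite).trans ?_)
  calc _ ≤ exp (-(-lam) * (γ / 2 * ∑ i, a i - 4 * Q / 3 * s))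
          * exp (-(γ * (lam * ∑ i, a i) / 2)) := by gcongr
    _ = exp (-s) := by
        rw [← exp_add]; congr 1; rw [hlam]; field_simp; ring

theorem measure_weightedSum_le_le_exp {Ω ι : Type*} [Fintype ι] [MeasurableSpace Ω]
    {μ : Measure Ω} {S : Ω → ι → Bool} {γ Q : ℝ} (hγ0 : 0 ≤ γ) (hγ1 : γ ≤ 1)
    (hlaw : μ.map S = Measure.pi fun _ => bern γ) (hQ : 0 < Q) {a : ι → ℝ}
    (ha : ∀ i, 0 ≤ a i ∧ a i ≤ Q) (s : ℝ) :
    μ {ω | ∑ i, (if S ω i then a i else 0) ≤ γ / 2 * ∑ i, a i - 4 * Q / 3 * s}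
      ≤ ENNReal.ofReal (exp (-s)) := by
  have := isProbabilityMeasure_bern hγ0 hγ1
  have hS : AEMeasurable S μ :=
    .of_map_ne_zero (by rw [hlaw]; exact IsProbabilityMeasure.ne_zero _)
  change μ (S ⁻¹' {b | ∑ i, (if b i then a i else 0) ≤ γ / 2 * ∑ i, a i - 4 * Q / 3 * s}) ≤ _
  rw [← Measure.map_apply_of_aemeasurable hS (Set.toFinite _).measurableSet, hlaw]
  exact pi_bern_weightedSum_le_le_exp hγ0 hγ1 hQ ha s

lemma exp_neg_log_one_div_add_mul_log {δ c : ℝ} (hδ : 0 < δ) (hc : 0 < c) (p : ℝ) :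
    exp (-(log (1 / δ) + p * log c)) = δ * c ^ (-p) := by
  rw [neg_add, exp_add, one_div, log_inv, neg_neg, exp_log hδ, rpow_def_of_pos hc, mul_neg,
    mul_comm (log c), mul_comm]

lemma measure_iUnion_le_ofReal_of_sum_le_one {ι Ω : Type*} [Fintype ι] [MeasurableSpace Ω]
    (μ : Measure Ω) {A : ι → Set Ω} {δ : ℝ} (hδ : 0 ≤ δ) {w : ι → ℝ} (hw0 : ∀ i, 0 ≤ w i)
    (hw : ∑ i, w i ≤ 1) (hA : ∀ i, μ (A i) ≤ ENNReal.ofReal (δ * w i)) :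
    μ (⋃ i, A i) ≤ ENNReal.ofReal δ :=
  calc μ (⋃ i, A i) ≤ ∑ i, μ (A i) := measure_iUnion_fintype_le μ A
    _ ≤ ∑ i, ENNReal.ofReal (δ * w i) := Finset.sum_le_sum fun i _ => hA i
    _ = ENNReal.ofReal (δ * ∑ i, w i) := by
        rw [Finset.mul_sum, ENNReal.ofReal_sum_of_nonneg fun i _ => mul_nonneg hδ (hw0 i)]
    _ ≤ ENNReal.ofReal δ := ENNReal.ofReal_le_ofReal (mul_le_of_le_one_right hδ hw)

theorem uniform_lower_tail_general
    (𝒳 : Type) [Fintype 𝒳] (pen : 𝒳 → ℝ)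
    (hkraft : ∑ X : 𝒳, (2 : ℝ) ^ (-pen X) ≤ 1)
    (N : ℕ) (a : 𝒳 → Fin N → ℝ) (Q : ℝ) (hQ : 0 < Q)
    (ha : ∀ X i, 0 ≤ a X i ∧ a X i ≤ Q)
    (γ δ : ℝ) (hγ : γ ∈ Set.Ioo (0 : ℝ) 1) (hδ : δ ∈ Set.Ioo (0 : ℝ) 1)
    (Ω : Type) [MeasurableSpace Ω] (μ : Measure Ω)
    (S : Ω → Fin N → Bool)
    (hlaw : Measure.map S μ = Measure.pi fun _ : Fin N => bern γ) :
    μ {ω | ∃ X : 𝒳,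
        (∑ i, if S ω i then a X i else 0)
          ≤ γ / 2 * (∑ i, a X i) - 4 * Q / 3 * (Real.log (1 / δ) + pen X * Real.log 2)}
      ≤ ENNReal.ofReal δ := by
  rw [Set.ofPred_exists]
  refine measure_iUnion_le_ofReal_of_sum_le_one μ hδ.1.le (fun X => by positivity) hkraft
    fun X => ?_
  rw [← exp_neg_log_one_div_add_mul_log hδ.1 two_pos]
  exact measure_weightedSum_le_le_exp hγ.1.le hγ.2.le hlaw hQ (ha X) _

/-- Uniform lower-tail concentration bound over a finite class with Kraft–McMillan
penalties. -/
theorem uniform_lower_tail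
    (𝒳 : Type) [Fintype 𝒳] (pen : 𝒳 → ℝ) (hpen : ∀ X, 1 ≤ pen X)
    (hkraft : ∑ X : 𝒳, (2 : ℝ) ^ (-pen X) ≤ 1)
    (N : ℕ) (a : 𝒳 → Fin N → ℝ) (Q : ℝ) (hQ : 0 < Q)
    (ha : ∀ X i, 0 ≤ a X i ∧ a X i ≤ Q)
    (γ δ : ℝ) (hγ : γ ∈ Set.Ioo (0 : ℝ) 1) (hδ : δ ∈ Set.Ioo (0 : ℝ) 1)
    (Ω : Type) [MeasurableSpace Ω] (μ : Measure Ω) [IsProbabilityMeasure μ]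
    (S : Ω → Fin N → Bool)
    (hlaw : Measure.map S μ = Measure.pi fun _ : Fin N => bern γ) :
    μ {ω | ∃ X : 𝒳,
        (∑ i, if S ω i then a X i else 0)
          ≤ γ / 2 * (∑ i, a X i) - 4 * Q / 3 * (Real.log (1 / δ) + pen X * Real.log 2)}
      ≤ ENNReal.ofReal δ :=
  uniform_lower_tail_general 𝒳 pen hkraft N a Q hQ ha γ δ hγ hδ Ω μ S hlaw
end
end

section
/- Let F ∈ ℕ and L ≥ 2 be real. Let A, A_Q ∈ ℝ^{n1×F}, B, B_Q ∈ ℝ^{n2×F}, C, C_Q ∈ ℝ^{n3×F} satisfy ‖A‖_∞ ≤ A_max, ‖B‖_∞ ≤ B_max, ‖C‖_∞ ≤ C_max and ‖A_Q − A‖_∞ ≤ A_max/(L−1), ‖B_Q − B‖_∞ ≤ B_max/(L−1), ‖C_Q − C‖_∞ ≤ C_max/(L−1). Then the CP tensors satisfy ‖[A_Q,B_Q,C_Q] − [A,B,C]‖_∞ ≤ F A_max B_max C_max [ (1 + 1/(L−1))³ − 1 ] ≤ 7 F A_max B_max C_max / (L−1). -/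
open MeasureTheory ProbabilityTheory

noncomputable section

/-!
Each entry of `[A_Q,B_Q,C_Q] - [A,B,C]` is a sum of `F` differences `a'b'c' - abc`. Telescoping,
`a'b'c' - abc = (a' - a)b'c' + a(b' - b)c' + ab(c' - c)`, and a perturbed factor is bounded by
`(1 + δ)` times its bound, so each difference is at most `αβγ(δ(1 + δ)² + δ(1 + δ) + δ) =
αβγ((1 + δ)³ - 1)` with `δ = 1/(L - 1)`. For `δ ≤ 1` this is at most `7δ αβγ`.
-/

lemma abs_le_matMaxAbs {α β : Type} [Fintype α] [Fintype β] (M : α → β → ℝ) (a : α) (b : β) :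
    |M a b| ≤ matMaxAbs M :=
  le_ciSup (f := fun q : α × β => |M q.1 q.2|) (Set.finite_range _).bddAbove (a, b)

lemma matMaxAbs_nonneg {α β : Type} [Fintype α] [Fintype β] (M : α → β → ℝ) :
    0 ≤ matMaxAbs M :=
  Real.iSup_nonneg fun _ => abs_nonneg _

section Perturbation

variable {R : Type*} [SeminormedRing R]

lemma norm_le_mul_one_add_of_norm_sub_le {a a' : R} {α δ : ℝ} (ha : ‖a‖ ≤ α)
    (hda : ‖a' - a‖ ≤ α * δ) : ‖a'‖ ≤ α * (1 + δ) :=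
  calc ‖a'‖ ≤ ‖a‖ + ‖a' - a‖ := norm_le_norm_add_norm_sub' a' a
    _ ≤ α + α * δ := add_le_add ha hda
    _ = α * (1 + δ) := by ring

lemma norm_mul_mul_sub_mul_mul_le {a b c a' b' c' : R} {α β γ δ : ℝ} (hδ : 0 ≤ δ)
    (ha : ‖a‖ ≤ α) (hb : ‖b‖ ≤ β) (hc : ‖c‖ ≤ γ)
    (hda : ‖a' - a‖ ≤ α * δ) (hdb : ‖b' - b‖ ≤ β * δ) (hdc : ‖c' - c‖ ≤ γ * δ) :
    ‖a' * b' * c' - a * b * c‖ ≤ α * β * γ * ((1 + δ) ^ 3 - 1) := by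
  have hα : 0 ≤ α := (norm_nonneg a).trans ha
  have hβ : 0 ≤ β := (norm_nonneg b).trans hb
  have hγ : 0 ≤ γ := (norm_nonneg c).trans hc
  have hb' := norm_le_mul_one_add_of_norm_sub_le hb hdb
  have hc' := norm_le_mul_one_add_of_norm_sub_le hc hdc
  have telescope : a' * b' * c' - a * b * c
      = (a' - a) * b' * c' + a * (b' - b) * c' + a * b * (c' - c) := by noncomm_ring
  calc ‖a' * b' * c' - a * b * c‖
      ≤ ‖a' - a‖ * ‖b'‖ * ‖c'‖ + ‖a‖ * ‖b' - b‖ * ‖c'‖ + ‖a‖ * ‖b‖ * ‖c' - c‖ := by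
        rw [telescope]
        refine (norm_add₃_le ..).trans (add_le_add_three ?_ ?_ ?_) <;>
          exact norm_mul₃_le ..
    _ ≤ α * δ * (β * (1 + δ)) * (γ * (1 + δ)) + α * (β * δ) * (γ * (1 + δ))
          + α * β * (γ * δ) := by gcongr
    _ = α * β * γ * ((1 + δ) ^ 3 - 1) := by ring

end Perturbation

lemma one_add_pow_three_sub_one_le {δ : ℝ} (h0 : 0 ≤ δ) (h1 : δ ≤ 1) :
    (1 + δ) ^ 3 - 1 ≤ 7 * δ := by
  nlinarith [mul_nonneg h0 h0, mul_le_mul_of_nonneg_left h1 (mul_nonneg h0 h0)]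

lemma abs_cp_sub_cp_le {n1 n2 n3 F : ℕ} {A AQ : Matrix (Fin n1) (Fin F) ℝ}
    {B BQ : Matrix (Fin n2) (Fin F) ℝ} {C CQ : Matrix (Fin n3) (Fin F) ℝ} {α β γ δ : ℝ}
    (hδ : 0 ≤ δ) (hA : ∀ i f, |A i f| ≤ α) (hB : ∀ j f, |B j f| ≤ β) (hC : ∀ k f, |C k f| ≤ γ)
    (hAQ : ∀ i f, |AQ i f - A i f| ≤ α * δ) (hBQ : ∀ j f, |BQ j f - B j f| ≤ β * δ)
    (hCQ : ∀ k f, |CQ k f - C k f| ≤ γ * δ) (t : Fin n1 × Fin n2 × Fin n3) :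
    |cp AQ BQ CQ t - cp A B C t| ≤ F * (α * β * γ * ((1 + δ) ^ 3 - 1)) := by
  obtain ⟨i, j, k⟩ := t
  calc |cp AQ BQ CQ (i, j, k) - cp A B C (i, j, k)|
      = |∑ f, (AQ i f * BQ j f * CQ k f - A i f * B j f * C k f)| := by
        rw [cp, cp, Finset.sum_sub_distrib]
    _ ≤ ∑ f, |AQ i f * BQ j f * CQ k f - A i f * B j f * C k f| :=
        Finset.abs_sum_le_sum_abs _ _
    _ ≤ ∑ _f : Fin F, α * β * γ * ((1 + δ) ^ 3 - 1) := Finset.sum_le_sum fun f _ =>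
        norm_mul_mul_sub_mul_mul_le (R := ℝ) hδ (hA i f) (hB j f) (hC k f)
          (hAQ i f) (hBQ j f) (hCQ k f)
    _ = F * (α * β * γ * ((1 + δ) ^ 3 - 1)) := by
        rw [Finset.sum_const, Finset.card_univ, Fintype.card_fin, nsmul_eq_mul]

/-- Entrywise effect of quantizing each CP factor to a uniform grid with `L` levels. -/
theorem cp_quantization_bound
    (n1 n2 n3 F : ℕ) (L Amax Bmax Cmax : ℝ) (hL : 2 ≤ L)
    (A AQ : Matrix (Fin n1) (Fin F) ℝ) (B BQ : Matrix (Fin n2) (Fin F) ℝ)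
    (C CQ : Matrix (Fin n3) (Fin F) ℝ)
    (hA : matMaxAbs A ≤ Amax) (hB : matMaxAbs B ≤ Bmax) (hC : matMaxAbs C ≤ Cmax)
    (hAQ : matMaxAbs (fun i f => AQ i f - A i f) ≤ Amax / (L - 1))
    (hBQ : matMaxAbs (fun j f => BQ j f - B j f) ≤ Bmax / (L - 1))
    (hCQ : matMaxAbs (fun k f => CQ k f - C k f) ≤ Cmax / (L - 1)) :
    (∀ t, |cp AQ BQ CQ t - cp A B C t|
        ≤ F * Amax * Bmax * Cmax * ((1 + 1 / (L - 1)) ^ 3 - 1))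
    ∧ F * Amax * Bmax * Cmax * ((1 + 1 / (L - 1)) ^ 3 - 1)
        ≤ 7 * F * Amax * Bmax * Cmax / (L - 1) := by
  have hL1 : 0 < L - 1 := by linarith
  have hδ0 : 0 ≤ 1 / (L - 1) := by positivity
  have hδ1 : 1 / (L - 1) ≤ 1 := by rw [div_le_one hL1]; linarith
  have entry {n : ℕ} {M : Matrix (Fin n) (Fin F) ℝ} {m : ℝ} (h : matMaxAbs M ≤ m) (i f) :
      |M i f| ≤ m := (abs_le_matMaxAbs M i f).trans h
  simp only [div_eq_mul_one_div Amax, div_eq_mul_one_div Bmax, div_eq_mul_one_div Cmax]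
    at hAQ hBQ hCQ
  refine ⟨fun t => ?_, ?_⟩
  · simpa only [mul_assoc] using abs_cp_sub_cp_le hδ0 (entry hA) (entry hB) (entry hC)
      (entry hAQ) (entry hBQ) (entry hCQ) t
  · have hABC : 0 ≤ (F : ℝ) * Amax * Bmax * Cmax := by
      have := (matMaxAbs_nonneg A).trans hA
      have := (matMaxAbs_nonneg B).trans hB
      have := (matMaxAbs_nonneg C).trans hC
      positivity
    calc (F : ℝ) * Amax * Bmax * Cmax * ((1 + 1 / (L - 1)) ^ 3 - 1)
        ≤ F * Amax * Bmax * Cmax * (7 * (1 / (L - 1))) := by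
          gcongr; exact one_add_pow_three_sub_one_le hδ0 hδ1
      _ = 7 * F * Amax * Bmax * Cmax / (L - 1) := by ring
end
end
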